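/- arXiv:1707.08738 — 2 statements merged into one kernel-verified Lean document; each statement's English description precedes it below -/
import Mathlib

section
/- The set P_{t_i} of probability measures μ on X × T satisfying μ([φ]) ≥ θ ⟺ B_i^θ φ ∈ t_i (for all formulas φ and all θ ∈ Θ) is nonempty: the function μ_{i,ω}([φ]) := Pr_i(ω)([[φ]]_M), where d_i(ω) = t_i, is a well-defined pre-measure on the algebra {[φ] : φ ∈ L_B^Θ} and extends by Carathéodory's theorem to a probability measure in P_{t_i}. -/
open MeasureTheory ENNReal

/-- The language `L_B^Θ`: primitive propositions, negation, conjunction, and belief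
operators `B_i^θ` for `θ ∈ Θ`. -/
inductive Formula (Φ I : Type*) (Θ : Set ℝ≥0∞) : Type _ where
  | prim : Φ → Formula Φ I Θ
  | neg : Formula Φ I Θ → Formula Φ I Θ
  | conj : Formula Φ I Θ → Formula Φ I Θ → Formula Φ I Θ
  | bel : I → Θ → Formula Φ I Θ → Formula Φ I Θ

/-- Truth sets of formulas in a probability model `(Ω, (Pr_i), π)`. -/
def sem {Ω Φ I : Type*} {Θ : Set ℝ≥0∞} [MeasurableSpace Ω]
    (Pr : I → Ω → Measure Ω) (π : Φ → Set Ω) : Formula Φ I Θ → Set Ω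
  | .prim p => π p
  | .neg φ => (sem Pr π φ)ᶜ
  | .conj φ ψ => sem Pr π φ ∩ sem Pr π ψ
  | .bel i θ φ => {ω | (θ : ℝ≥0∞) ≤ Pr i ω (sem Pr π φ)}

/-- A probability model: a measurable space of worlds, measurable introspective belief
functions `Pr_i : Ω → Δ(Ω)`, and an interpretation `π` of primitive propositions. -/
structure ProbModel (Φ : Type) (n : ℕ) (Θ : Set ℝ≥0∞) where
  Ω : Type
  ms : MeasurableSpace Ω
  Pr : Fin n → Ω → @Measure Ω ms
  prob : ∀ i ω, IsProbabilityMeasure (Pr i ω)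
  measPr : ∀ i (E : Set Ω) (θ : ℝ≥0∞), MeasurableSet[ms] E →
    MeasurableSet[ms] {ω | θ ≤ Pr i ω E}
  π : Φ → Set Ω
  measπ : ∀ p, MeasurableSet[ms] (π p)
  introspect : ∀ i ω,
    (⨅ (E : Set Ω) (_ : {ω' | Pr i ω' = Pr i ω} ⊆ E) (_ : MeasurableSet[ms] E), Pr i ω E) = 1

/-- Truth sets in a (bundled) probability model. -/
def ProbModel.sem {Φ : Type} {n : ℕ} {Θ : Set ℝ≥0∞} (M : ProbModel Φ n Θ) :
    Formula Φ (Fin n) Θ → Set M.Ω :=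
  @_root_.sem M.Ω Φ (Fin n) Θ M.ms M.Pr M.π

/-- Purely propositional formulas: Boolean combinations of primitive propositions. -/
inductive IsProp {Φ I : Type*} {Θ : Set ℝ≥0∞} : Formula Φ I Θ → Prop where
  | prim (p : Φ) : IsProp (.prim p)
  | neg {φ} : IsProp φ → IsProp (.neg φ)
  | conj {φ ψ} : IsProp φ → IsProp ψ → IsProp (.conj φ ψ)

/-- `i`-formulas: Boolean combinations of formulas of the form `B_i^θ ψ`. -/
inductive IsIFormula {Φ I : Type*} {Θ : Set ℝ≥0∞} (i : I) : Formula Φ I Θ → Prop where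
  | bel (θ : Θ) (φ : Formula Φ I Θ) : IsIFormula i (.bel i θ φ)
  | neg {φ} : IsIFormula i φ → IsIFormula i (.neg φ)
  | conj {φ ψ} : IsIFormula i φ → IsIFormula i ψ → IsIFormula i (.conj φ ψ)

/-- The `0`-description of a world: all purely propositional formulas true at it. -/
def d0 {Φ : Type} {n : ℕ} {Θ : Set ℝ≥0∞} (M : ProbModel Φ n Θ) (ω : M.Ω) :
    Set (Formula Φ (Fin n) Θ) :=
  {φ | IsProp φ ∧ ω ∈ M.sem φ}

/-- The `i`-description of a world: all `i`-formulas true at it. -/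
def di {Φ : Type} {n : ℕ} {Θ : Set ℝ≥0∞} (M : ProbModel Φ n Θ) (i : Fin n) (ω : M.Ω) :
    Set (Formula Φ (Fin n) Θ) :=
  {φ | IsIFormula i φ ∧ ω ∈ M.sem φ}

/-- `ω` satisfies every formula in `S`. -/
def SatAll {Φ : Type} {n : ℕ} {Θ : Set ℝ≥0∞} (M : ProbModel Φ n Θ) (ω : M.Ω)
    (S : Set (Formula Φ (Fin n) Θ)) : Prop :=
  ∀ φ ∈ S, ω ∈ M.sem φ

/-- Semantic entailment: every world of every probability model satisfying all of `S`
satisfies `φ`. -/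
def Entails {Φ : Type} {n : ℕ} {Θ : Set ℝ≥0∞} (S : Set (Formula Φ (Fin n) Θ))
    (φ : Formula Φ (Fin n) Θ) : Prop :=
  ∀ (M : ProbModel Φ n Θ) (ω : M.Ω), SatAll M ω S → ω ∈ M.sem φ

/-- A description: a satisfiable and maximal set of formulas. -/
def IsDescription {Φ : Type} {n : ℕ} {Θ : Set ℝ≥0∞} (D : Set (Formula Φ (Fin n) Θ)) : Prop :=
  (∃ (M : ProbModel Φ n Θ) (ω : M.Ω), SatAll M ω D) ∧
    ∀ φ : Formula Φ (Fin n) Θ, φ ∈ D ∨ Formula.neg φ ∈ D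

variable {Φ : Type} {n : ℕ} {Θ : Set ℝ≥0∞}

/-- The space `X` of 0-descriptions arising from worlds of `M`. -/
def Desc0 (M : ProbModel Φ n Θ) : Type :=
  {x : Set (Formula Φ (Fin n) Θ) // ∃ ω : M.Ω, x = d0 M ω}

/-- The space `T_i` of `i`-descriptions arising from worlds of `M`. -/
def DescI (M : ProbModel Φ n Θ) (i : Fin n) : Type :=
  {t : Set (Formula Φ (Fin n) Θ) // ∃ ω : M.Ω, t = di M i ω}

/-- `E_0(φ) = {x : φ ∈ x}`. -/
def E0 (M : ProbModel Φ n Θ) (φ : Formula Φ (Fin n) Θ) : Set (Desc0 M) :=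
  {x | φ ∈ x.1}

/-- `E_i(φ) = {t_i : φ ∈ t_i}`. -/
def Ei (M : ProbModel Φ n Θ) (i : Fin n) (φ : Formula Φ (Fin n) Θ) : Set (DescI M i) :=
  {t | φ ∈ t.1}

instance (M : ProbModel Φ n Θ) : MeasurableSpace (Desc0 M) :=
  MeasurableSpace.generateFrom {s | ∃ φ, s = E0 M φ}

instance (M : ProbModel Φ n Θ) (i : Fin n) : MeasurableSpace (DescI M i) :=
  MeasurableSpace.generateFrom {s | ∃ φ, s = Ei M i φ}

/-- `[φ] = {(x,t) : φ ∈ D(x,t)}`, where `D(x,t)` is the unique description extending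
`x ∪ ⋃_i t_i`; membership in `D(x,t)` is equivalently expressed by entailment. -/
def brack (M : ProbModel Φ n Θ) (φ : Formula Φ (Fin n) Θ) :
    Set (Desc0 M × ∀ i, DescI M i) :=
  {q | Entails (q.1.1 ∪ ⋃ i : Fin n, (q.2 i).1) φ}

/-! The measure is the image of `Pr_i(ω)` under the map sending a world `w` to its
descriptions `(d_0(w), (d_j(w))_j)`, so no extension theorem is needed. A world satisfying
the descriptions collected in a point `q` of `X × T` satisfies `φ` exactly when `q` lies in
the set obtained from `φ` by reading primitive propositions off `q.1` and belief atoms of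
agent `j` off `q.2 j`. This makes `[φ]` measurable, provided every `q` is satisfiable, and
identifies the preimage of `[φ]` with `[[φ]]_M`. Satisfiability holds in the model on
`Ω × Ωⁿ` in which the facts are read from the first coordinate and the beliefs of agent `j`
from the `j`-th coordinate of the second. -/

theorem iInf_measure_superset_eq_one_iff {α : Type*} [MeasurableSpace α] (μ : Measure α)
    [IsProbabilityMeasure μ] (K : Set α) :
    (⨅ (E : Set α) (_ : K ⊆ E) (_ : MeasurableSet E), μ E) = 1 ↔
      ∀ E, K ⊆ E → MeasurableSet E → μ E = 1 := by
  refine ⟨fun h E hKE hE => le_antisymm prob_le_one ?_, fun h => le_antisymm ?_ ?_⟩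
  · exact h ▸ iInf₂_le_of_le E hKE (iInf_le _ hE)
  · exact iInf₂_le_of_le Set.univ K.subset_univ (iInf_le_of_le .univ measure_univ.le)
  · exact le_iInf₂ fun E hKE => le_iInf fun hE => (h E hKE hE).ge

namespace ProbModel

variable (M : ProbModel Φ n Θ)

instance instMeasurableSpace : MeasurableSpace M.Ω := M.ms

instance (i : Fin n) (w : M.Ω) : IsProbabilityMeasure (M.Pr i w) := M.prob i w

theorem measurableSet_sem : ∀ φ : Formula Φ (Fin n) Θ, MeasurableSet (M.sem φ)
  | .prim p => M.measπ p
  | .neg φ => (measurableSet_sem φ).compl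
  | .conj φ ψ => (measurableSet_sem φ).inter (measurableSet_sem ψ)
  | .bel j θ φ => M.measPr j _ θ (measurableSet_sem φ)

def diag : M.Ω → M.Ω × (Fin n → M.Ω) := fun w => (w, fun _ => w)

theorem measurable_diag : Measurable M.diag :=
  measurable_id.prodMk (measurable_pi_lambda _ fun _ => measurable_id)

theorem Pr_apply_eq_one_of_subset (j : Fin n) (w : M.Ω) :
    ∀ E, {w' | M.Pr j w' = M.Pr j w} ⊆ E → MeasurableSet E → M.Pr j w E = 1 :=
  (iInf_measure_superset_eq_one_iff _ _).1 (M.introspect j w)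

noncomputable def decouple : ProbModel Φ n Θ where
  Ω := M.Ω × (Fin n → M.Ω)
  ms := inferInstance
  Pr j q := (M.Pr j (q.2 j)).map M.diag
  prob _ _ := Measure.isProbabilityMeasure_map M.measurable_diag.aemeasurable
  measPr j E θ hE := by
    simp only [Measure.map_apply M.measurable_diag hE]
    exact (M.measPr j _ θ (M.measurable_diag hE)).preimage
      ((measurable_pi_apply j).comp measurable_snd)
  π p := Prod.fst ⁻¹' M.π p
  measπ p := measurable_fst (M.measπ p)
  introspect j q := by
    have := Measure.isProbabilityMeasure_map (μ := M.Pr j (q.2 j)) M.measurable_diag.aemeasurable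
    refine (iInf_measure_superset_eq_one_iff _ _).2 fun E hKE hE => ?_
    rw [Measure.map_apply M.measurable_diag hE]
    refine M.Pr_apply_eq_one_of_subset j (q.2 j) _ (fun w hw => hKE ?_) (M.measurable_diag hE)
    exact congrArg (Measure.map M.diag) hw

theorem preimage_diag_sem_decouple :
    ∀ φ : Formula Φ (Fin n) Θ, M.diag ⁻¹' M.decouple.sem φ = M.sem φ
  | .prim _ => rfl
  | .neg φ => congrArg compl (preimage_diag_sem_decouple φ)
  | .conj φ ψ =>
      congrArg₂ (· ∩ ·) (preimage_diag_sem_decouple φ) (preimage_diag_sem_decouple ψ)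
  | .bel j θ φ => by
      ext w
      change (θ : ℝ≥0∞) ≤ (M.Pr j w).map M.diag (M.decouple.sem φ) ↔ _
      rw [Measure.map_apply M.measurable_diag (M.decouple.measurableSet_sem φ),
        preimage_diag_sem_decouple φ]
      rfl

theorem mem_sem_decouple_of_isProp {φ : Formula Φ (Fin n) Θ} (hφ : IsProp φ)
    (q : M.decouple.Ω) : q ∈ M.decouple.sem φ ↔ q.1 ∈ M.sem φ := by
  induction hφ with
  | prim _ => rfl
  | neg _ ih => exact not_congr ih
  | conj _ _ ih₁ ih₂ => exact and_congr ih₁ ih₂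

theorem mem_sem_decouple_of_isIFormula {j : Fin n} {φ : Formula Φ (Fin n) Θ}
    (hφ : IsIFormula j φ) (q : M.decouple.Ω) : q ∈ M.decouple.sem φ ↔ q.2 j ∈ M.sem φ := by
  induction hφ with
  | bel θ ψ =>
      change (θ : ℝ≥0∞) ≤ (M.Pr j (q.2 j)).map M.diag (M.decouple.sem ψ) ↔ _
      rw [Measure.map_apply M.measurable_diag (M.decouple.measurableSet_sem ψ),
        M.preimage_diag_sem_decouple ψ]
      rfl
  | neg _ ih => exact not_congr ih
  | conj _ _ ih₁ ih₂ => exact and_congr ih₁ ih₂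

end ProbModel

section Descriptions

variable {M : ProbModel Φ n Θ}

def descUnion (q : Desc0 M × ∀ j, DescI M j) : Set (Formula Φ (Fin n) Θ) :=
  q.1.1 ∪ ⋃ j, (q.2 j).1

theorem Desc0.neg_mem_of_notMem (x : Desc0 M) {φ : Formula Φ (Fin n) Θ} (hφ : IsProp φ)
    (h : φ ∉ x.1) : Formula.neg φ ∈ x.1 := by
  obtain ⟨w, hw⟩ := x.2
  rw [hw] at h ⊢
  exact ⟨hφ.neg, fun hw => h ⟨hφ, hw⟩⟩

theorem DescI.neg_mem_of_notMem {j : Fin n} (t : DescI M j) {φ : Formula Φ (Fin n) Θ}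
    (hφ : IsIFormula j φ) (h : φ ∉ t.1) : Formula.neg φ ∈ t.1 := by
  obtain ⟨w, hw⟩ := t.2
  rw [hw] at h ⊢
  exact ⟨hφ.neg, fun hw => h ⟨hφ, hw⟩⟩

theorem satisfiable_descUnion (q : Desc0 M × ∀ j, DescI M j) :
    ∃ (N : ProbModel Φ n Θ) (w : N.Ω), SatAll N w (descUnion q) := by
  obtain ⟨w₀, hx⟩ := q.1.2
  choose w hw using fun j => (q.2 j).2
  refine ⟨M.decouple, (w₀, w), fun φ hφ => ?_⟩
  rcases hφ with hφ | hφ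
  · rw [hx] at hφ
    exact (M.mem_sem_decouple_of_isProp hφ.1 _).2 hφ.2
  · obtain ⟨j, hφ⟩ := Set.mem_iUnion.1 hφ
    rw [hw j] at hφ
    exact (M.mem_sem_decouple_of_isIFormula hφ.1 _).2 hφ.2

theorem SatAll.mem_sem_iff {N : ProbModel Φ n Θ} {w : N.Ω} {S D : Set (Formula Φ (Fin n) Θ)}
    (hsat : SatAll N w S) (hDS : D ⊆ S) {φ : Formula Φ (Fin n) Θ}
    (hφ : φ ∉ D → Formula.neg φ ∈ D) : w ∈ N.sem φ ↔ φ ∈ D := by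
  by_cases h : φ ∈ D
  · exact iff_of_true (hsat φ (hDS h)) h
  · exact iff_of_false (hsat _ (hDS (hφ h))) h

variable (M) in
def brackRec : Formula Φ (Fin n) Θ → Set (Desc0 M × ∀ j, DescI M j)
  | .prim p => Prod.fst ⁻¹' E0 M (.prim p)
  | .neg φ => (brackRec φ)ᶜ
  | .conj φ ψ => brackRec φ ∩ brackRec ψ
  | .bel j θ φ => (fun q => q.2 j) ⁻¹' Ei M j (.bel j θ φ)

variable (M) in
theorem measurableSet_brackRec : ∀ φ : Formula Φ (Fin n) Θ, MeasurableSet (brackRec M φ)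
  | .prim _ => measurable_fst (MeasurableSpace.measurableSet_generateFrom ⟨_, rfl⟩)
  | .neg φ => (measurableSet_brackRec φ).compl
  | .conj φ ψ => (measurableSet_brackRec φ).inter (measurableSet_brackRec ψ)
  | .bel j _ _ => ((measurable_pi_apply j).comp measurable_snd)
      (MeasurableSpace.measurableSet_generateFrom ⟨_, rfl⟩)

theorem SatAll.mem_sem_iff_mem_brackRec {q : Desc0 M × ∀ j, DescI M j}
    {N : ProbModel Φ n Θ} {w : N.Ω} (hsat : SatAll N w (descUnion q)) :
    ∀ φ : Formula Φ (Fin n) Θ, w ∈ N.sem φ ↔ q ∈ brackRec M φ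
  | .prim p => hsat.mem_sem_iff Set.subset_union_left (q.1.neg_mem_of_notMem (.prim p))
  | .neg φ => not_congr (hsat.mem_sem_iff_mem_brackRec φ)
  | .conj φ ψ => and_congr (hsat.mem_sem_iff_mem_brackRec φ) (hsat.mem_sem_iff_mem_brackRec ψ)
  | .bel j θ φ => hsat.mem_sem_iff (Set.subset_union_of_subset_right (Set.subset_iUnion _ j) _)
      ((q.2 j).neg_mem_of_notMem (.bel θ φ))

variable (M) in
theorem brack_eq_brackRec (φ : Formula Φ (Fin n) Θ) : brack M φ = brackRec M φ := by
  ext q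
  obtain ⟨N, w, hsat⟩ := satisfiable_descUnion q
  exact ⟨fun h => (hsat.mem_sem_iff_mem_brackRec φ).1 (h N w hsat),
    fun h N' w' hsat' => (hsat'.mem_sem_iff_mem_brackRec φ).2 h⟩

variable (M) in
theorem measurableSet_brack (φ : Formula Φ (Fin n) Θ) : MeasurableSet (brack M φ) :=
  brack_eq_brackRec M φ ▸ measurableSet_brackRec M φ

end Descriptions

namespace ProbModel

variable (M : ProbModel Φ n Θ)

def toDesc (w : M.Ω) : Desc0 M × ∀ j, DescI M j :=
  (⟨d0 M w, w, rfl⟩, fun j => ⟨di M j w, w, rfl⟩)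

theorem measurable_toDesc : Measurable M.toDesc := by
  refine Measurable.prodMk (f := fun w => (M.toDesc w).1) (g := fun w => (M.toDesc w).2) ?_
      (measurable_pi_iff.2 fun j => ?_) <;>
    refine measurable_generateFrom ?_ <;>
    rintro _ ⟨φ, rfl⟩ <;>
    exact (MeasurableSet.const _).inter (M.measurableSet_sem φ)

theorem satAll_descUnion_toDesc (w : M.Ω) : SatAll M w (descUnion (M.toDesc w)) := by
  rintro φ (hφ | hφ)
  · exact hφ.2
  · obtain ⟨j, hφ⟩ := Set.mem_iUnion.1 hφ
    exact hφ.2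

theorem preimage_toDesc_brack (φ : Formula Φ (Fin n) Θ) : M.toDesc ⁻¹' brack M φ = M.sem φ := by
  ext w
  rw [brack_eq_brackRec]
  exact ((M.satAll_descUnion_toDesc w).mem_sem_iff_mem_brackRec φ).symm

end ProbModel

/-- The set `P_{t_i}` is nonempty: there is a probability measure `μ` on `X × T` such
that for every formula `φ` and every `θ ∈ Θ`, `μ([φ]) ≥ θ` iff `B_i^θ φ ∈ t_i`
(where `t_i = d_i(ω)`). -/
theorem stmt16 (M : ProbModel Φ n Θ) (i : Fin n) (ω : M.Ω) :
    ∃ μ : Measure (Desc0 M × ∀ j, DescI M j), IsProbabilityMeasure μ ∧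
      ∀ (φ : Formula Φ (Fin n) Θ) (θ : Θ),
        ((θ : ℝ≥0∞) ≤ μ (brack M φ) ↔ Formula.bel i θ φ ∈ di M i ω) := by
  refine ⟨(M.Pr i ω).map M.toDesc,
    Measure.isProbabilityMeasure_map M.measurable_toDesc.aemeasurable, fun φ θ => ?_⟩
  rw [Measure.map_apply M.measurable_toDesc (measurableSet_brack M φ), M.preimage_toDesc_brack]
  exact ⟨fun h => ⟨.bel θ φ, h⟩, And.right⟩
end

section
/- If a probability measure μ on an algebra-generated σ-algebra satisfies μ([B_i^θψ]) ∈ {0,1} with value 1 exactly when B_i^θψ ∈ t_i, and t_i is closed under positive introspection (B_i^θψ ∈ t_i iff B_i^1 B_i^θψ ∈ t_i), then the marginal of μ on T_i assigns outer measure 1 to {t_i}; i.e., the marginal of β_i(t_i) on T_i is the point mass δ_{t_i}. -/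
open MeasureTheory ENNReal

variable {Φ : Type} {n : ℕ} {Θ : Set ℝ≥0∞}

/-- The outer measure induced by `μ`: the infimum of `μ E` over measurable `E ⊇ A`. -/
noncomputable def outerOf {X : Type*} [MeasurableSpace X] (μ : Measure X) (A : Set X) : ℝ≥0∞ :=
  ⨅ (E : Set X) (_ : A ⊆ E) (_ : MeasurableSet E), μ E

/-!
Let `ν` be the marginal of `μ` on `T_i`. The set of points whose `i`-component contains
`B_i^θ ψ` lies in `[B_i^θ ψ]`, and the rest of `[B_i^θ ψ]` consists of inconsistent points (their
`i`-component contains `¬B_i^θ ψ`), which lie in `[B_i^1 (ψ ∧ ¬ψ)]`; that set is `μ`-null because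
`B_i^1 (ψ ∧ ¬ψ)` fails at `ω`. Hence `ν (E_i(B_i^θ ψ))` is `1` or `0` according as `t_i` lies in
`E_i(B_i^θ ψ)` or not, i.e. `ν` agrees with `δ_{t_i}` there. For a probability measure,
agreement with a Dirac mass is preserved under complements, intersections and countable
unions; so it spreads from these sets to all `E_i(φ)` and then to the whole σ-algebra, giving
`ν = δ_{t_i}`.
-/

namespace MeasureTheory

open Set

variable {X : Type*} [MeasurableSpace X] {ν : Measure X} [IsProbabilityMeasure ν] {x : X}
  {s t : Set X}

theorem measure_compl_eq_indicator (hs : MeasurableSet s) (h : ν s = s.indicator 1 x) :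
    ν sᶜ = sᶜ.indicator 1 x := by
  by_cases hx : x ∈ s <;> simp_all [prob_compl_eq_one_sub hs]

theorem measure_inter_eq_indicator (hs : MeasurableSet s) (ht : MeasurableSet t)
    (hνs : ν s = s.indicator 1 x) (hνt : ν t = t.indicator 1 x) :
    ν (s ∩ t) = (s ∩ t).indicator 1 x := by
  by_cases hxs : x ∈ s
  · by_cases hxt : x ∈ t
    · have hsc : ν sᶜ = 0 := (prob_compl_eq_zero_iff hs).2 (by simp_all)
      have htc : ν tᶜ = 0 := (prob_compl_eq_zero_iff ht).2 (by simp_all)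
      rw [indicator_of_mem (mem_inter hxs hxt), Pi.one_apply,
        ← prob_compl_eq_zero_iff (hs.inter ht), compl_inter]
      exact measure_union_null hsc htc
    · rw [indicator_of_notMem fun h => hxt h.2]
      exact measure_inter_null_of_null_right s (by simp_all)
  · rw [indicator_of_notMem (fun h => hxs h.1)]
    exact measure_inter_null_of_null_left t (by simp_all)

theorem measure_iUnion_eq_indicator {s : ℕ → Set X} (h : ∀ m, ν (s m) = (s m).indicator 1 x) :
    ν (⋃ m, s m) = (⋃ m, s m).indicator 1 x := by
  by_cases hx : ∃ m, x ∈ s m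
  · obtain ⟨m, hm⟩ := hx
    rw [indicator_of_mem (mem_iUnion.2 ⟨m, hm⟩)]
    refine le_antisymm prob_le_one ?_
    calc (1 : ℝ≥0∞) = ν (s m) := by simp [h m, hm]
      _ ≤ ν (⋃ m, s m) := measure_mono (subset_iUnion s m)
  · push Not at hx
    rw [indicator_of_notMem (by simpa using hx)]
    exact measure_iUnion_null fun m => by simp [h m, hx m]

theorem Measure.eq_dirac_of_generateFrom {S : Set (Set X)}
    (hS : ‹MeasurableSpace X› = MeasurableSpace.generateFrom S)
    (h : ∀ s ∈ S, ν s = s.indicator 1 x) : ν = Measure.dirac x := by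
  ext s hs
  rw [Measure.dirac_apply' x hs]
  rw [hS] at hs
  induction s, hs using MeasurableSpace.generateFrom_induction with
  | hC s hs => exact h s hs
  | empty => simp
  | compl s hs ih => exact measure_compl_eq_indicator (hS ▸ hs) ih
  | iUnion s _ ih => exact measure_iUnion_eq_indicator ih

end MeasureTheory

namespace DescI

def ofWorld (M : ProbModel Φ n Θ) (i : Fin n) (ω : M.Ω) : DescI M i :=
  ⟨di M i ω, ω, rfl⟩

variable {M : ProbModel Φ n Θ} {i : Fin n} {φ ψ : Formula Φ (Fin n) Θ}

theorem isIFormula_of_mem (t : DescI M i) (h : φ ∈ t.1) : IsIFormula i φ := by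
  obtain ⟨ω, hω⟩ := t.2
  exact (hω ▸ h).1

theorem neg_mem_iff (t : DescI M i) (hφ : IsIFormula i φ) : Formula.neg φ ∈ t.1 ↔ φ ∉ t.1 := by
  obtain ⟨ω, hω⟩ := t.2
  rw [hω]
  exact ⟨fun ⟨_, h⟩ ⟨_, h'⟩ => h h', fun h => ⟨hφ.neg, fun h' => h ⟨hφ, h'⟩⟩⟩

theorem conj_mem_iff (t : DescI M i) (hφ : IsIFormula i φ) (hψ : IsIFormula i ψ) :
    Formula.conj φ ψ ∈ t.1 ↔ φ ∈ t.1 ∧ ψ ∈ t.1 := by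
  obtain ⟨ω, hω⟩ := t.2
  rw [hω]
  exact ⟨fun ⟨_, h, h'⟩ => ⟨⟨hφ, h⟩, ⟨hψ, h'⟩⟩, fun ⟨⟨_, h⟩, ⟨_, h'⟩⟩ => ⟨hφ.conj hψ, h, h'⟩⟩

end DescI

section Ei

variable (M : ProbModel Φ n Θ) (i : Fin n) {φ ψ : Formula Φ (Fin n) Θ}

theorem measurableSet_Ei (φ : Formula Φ (Fin n) Θ) : MeasurableSet (Ei M i φ) :=
  MeasurableSpace.measurableSet_generateFrom ⟨φ, rfl⟩

theorem Ei_eq_empty (hφ : ¬IsIFormula i φ) : Ei M i φ = ∅ :=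
  Set.eq_empty_of_forall_notMem fun t h => hφ (t.isIFormula_of_mem h)

theorem Ei_neg (hφ : IsIFormula i φ) : Ei M i (Formula.neg φ) = (Ei M i φ)ᶜ :=
  Set.ext fun t => t.neg_mem_iff hφ

theorem Ei_conj (hφ : IsIFormula i φ) (hψ : IsIFormula i ψ) :
    Ei M i (Formula.conj φ ψ) = Ei M i φ ∩ Ei M i ψ :=
  Set.ext fun t => t.conj_mem_iff hφ hψ

end Ei

section brack

variable {M : ProbModel Φ n Θ} {i : Fin n} {φ χ : Formula Φ (Fin n) Θ}

theorem preimage_Ei_subset_brack :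
    (fun q : Desc0 M × ∀ j, DescI M j => q.2 i) ⁻¹' Ei M i φ ⊆ brack M φ :=
  fun _ hq _ _ hsat => hsat φ (Set.mem_union_right _ (Set.mem_iUnion.2 ⟨i, hq⟩))

theorem brack_inter_brack_neg_subset : brack M φ ∩ brack M (Formula.neg φ) ⊆ brack M χ :=
  fun _ ⟨hφ, hnφ⟩ M' ω' hsat => absurd (hφ M' ω' hsat) (hnφ M' ω' hsat)

end brack

theorem measure_preimage_Ei_eq_measure_brack {M : ProbModel Φ n Θ} {i : Fin n}
    {μ : Measure (Desc0 M × ∀ j, DescI M j)} {φ χ : Formula Φ (Fin n) Θ}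
    (hχ : μ (brack M χ) = 0) (hφ : IsIFormula i φ) :
    μ ((fun q : Desc0 M × ∀ j, DescI M j => q.2 i) ⁻¹' Ei M i φ) = μ (brack M φ) := by
  refine measure_eq_measure_of_null_sdiff preimage_Ei_subset_brack (measure_mono_null ?_ hχ)
  intro q ⟨hqφ, hqEi⟩
  have hqneg : q.2 i ∈ Ei M i (Formula.neg φ) := by rwa [Ei_neg M i hφ]
  exact brack_inter_brack_neg_subset ⟨hqφ, preimage_Ei_subset_brack hqneg⟩

theorem bel_one_conj_neg_notMem_di (M : ProbModel Φ n Θ) (i : Fin n) (ω : M.Ω)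
    (h1 : (1 : ℝ≥0∞) ∈ Θ) (ψ : Formula Φ (Fin n) Θ) :
    Formula.bel i (⟨1, h1⟩ : Θ) (Formula.conj ψ (Formula.neg ψ)) ∉ di M i ω := by
  rintro ⟨-, h⟩
  have h' : (1 : ℝ≥0∞) ≤ M.Pr i ω (M.sem ψ ∩ (M.sem ψ)ᶜ) := h
  simp at h'

theorem map_Ei_eq_indicator (M : ProbModel Φ n Θ) (i : Fin n) (ω : M.Ω)
    {μ : Measure (Desc0 M × ∀ j, DescI M j)} [IsProbabilityMeasure μ]
    (h1 : (1 : ℝ≥0∞) ∈ Θ)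
    (hval : ∀ (θ : Θ) (ψ : Formula Φ (Fin n) Θ),
      μ (brack M (Formula.bel i θ ψ)) = 1 ↔ Formula.bel i θ ψ ∈ di M i ω)
    (h01 : ∀ (θ : Θ) (ψ : Formula Φ (Fin n) Θ),
      μ (brack M (Formula.bel i θ ψ)) = 0 ∨ μ (brack M (Formula.bel i θ ψ)) = 1)
    (φ : Formula Φ (Fin n) Θ) :
    μ.map (fun q : Desc0 M × ∀ j, DescI M j => q.2 i) (Ei M i φ) =
      (Ei M i φ).indicator 1 (DescI.ofWorld M i ω) := by
  have hproj : Measurable fun q : Desc0 M × ∀ j, DescI M j => q.2 i := measurable_snd.eval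
  have := Measure.isProbabilityMeasure_map (μ := μ) hproj.aemeasurable
  by_cases hφ : IsIFormula i φ
  swap
  · simp [Ei_eq_empty M i hφ]
  induction hφ with
  | bel θ ψ =>
    have hnull : μ (brack M (Formula.bel i ⟨1, h1⟩ (Formula.conj ψ (Formula.neg ψ)))) = 0 :=
      (h01 _ _).resolve_right fun h => bel_one_conj_neg_notMem_di M i ω h1 ψ ((hval _ _).1 h)
    rw [Measure.map_apply hproj (measurableSet_Ei M i _),
      measure_preimage_Ei_eq_measure_brack hnull (IsIFormula.bel θ ψ)]
    by_cases hmem : DescI.ofWorld M i ω ∈ Ei M i (Formula.bel i θ ψ)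
    · rw [Set.indicator_of_mem hmem, (hval θ ψ).2 hmem, Pi.one_apply]
    · rw [Set.indicator_of_notMem hmem]
      exact (h01 θ ψ).resolve_right fun h => hmem ((hval θ ψ).1 h)
  | neg hφ ih =>
    rw [Ei_neg M i hφ]
    exact measure_compl_eq_indicator (measurableSet_Ei M i _) ih
  | conj hφ hψ ihφ ihψ =>
    rw [Ei_conj M i hφ hψ]
    exact measure_inter_eq_indicator (measurableSet_Ei M i _) (measurableSet_Ei M i _) ihφ ihψ

theorem outerOf_eq {X : Type*} [MeasurableSpace X] (μ : Measure X) (A : Set X) :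
    outerOf μ A = μ A :=
  (measure_eq_iInf A).symm

theorem stmt18_general (M : ProbModel Φ n Θ) (i : Fin n) (ω : M.Ω)
    (μ : Measure (Desc0 M × ∀ j, DescI M j)) (hμ : IsProbabilityMeasure μ)
    (h1 : (1 : ℝ≥0∞) ∈ Θ)
    (hval : ∀ (θ : Θ) (ψ : Formula Φ (Fin n) Θ),
      μ (brack M (Formula.bel i θ ψ)) = 1 ↔ Formula.bel i θ ψ ∈ di M i ω)
    (h01 : ∀ (θ : Θ) (ψ : Formula Φ (Fin n) Θ),
      μ (brack M (Formula.bel i θ ψ)) = 0 ∨ μ (brack M (Formula.bel i θ ψ)) = 1) :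
    outerOf (Measure.map (fun q : Desc0 M × ∀ j, DescI M j => q.2 i) μ)
      {(⟨di M i ω, ⟨ω, rfl⟩⟩ : DescI M i)} = 1 := by
  have : IsProbabilityMeasure (μ.map fun q : Desc0 M × ∀ j, DescI M j => q.2 i) :=
    Measure.isProbabilityMeasure_map measurable_snd.eval.aemeasurable
  have hdirac :
      μ.map (fun q : Desc0 M × ∀ j, DescI M j => q.2 i) = Measure.dirac (DescI.ofWorld M i ω) :=
    Measure.eq_dirac_of_generateFrom rfl fun _ ⟨φ, hs⟩ =>
      hs ▸ map_Ei_eq_indicator M i ω h1 hval h01 φ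
  rw [outerOf_eq, hdirac]
  exact Measure.dirac_apply_of_mem rfl

/-- If `μ([B_i^θψ]) ∈ {0,1}` with value 1 exactly when `B_i^θψ ∈ t_i`, and `t_i` is
closed under positive introspection, then the marginal of `μ` on `T_i` assigns outer
measure 1 to `{t_i}`; i.e., it is the point mass `δ_{t_i}`. -/
theorem stmt18 (M : ProbModel Φ n Θ) (i : Fin n) (ω : M.Ω)
    (μ : Measure (Desc0 M × ∀ j, DescI M j)) (hμ : IsProbabilityMeasure μ)
    (h1 : (1 : ℝ≥0∞) ∈ Θ)
    (hval : ∀ (θ : Θ) (ψ : Formula Φ (Fin n) Θ),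
      μ (brack M (Formula.bel i θ ψ)) = 1 ↔ Formula.bel i θ ψ ∈ di M i ω)
    (h01 : ∀ (θ : Θ) (ψ : Formula Φ (Fin n) Θ),
      μ (brack M (Formula.bel i θ ψ)) = 0 ∨ μ (brack M (Formula.bel i θ ψ)) = 1)
    (hpos : ∀ (θ : Θ) (ψ : Formula Φ (Fin n) Θ),
      Formula.bel i θ ψ ∈ di M i ω ↔
        Formula.bel i (⟨1, h1⟩ : Θ) (Formula.bel i θ ψ) ∈ di M i ω) :
    outerOf (Measure.map (fun q : Desc0 M × ∀ j, DescI M j => q.2 i) μ)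
      {(⟨di M i ω, ⟨ω, rfl⟩⟩ : DescI M i)} = 1 :=
  stmt18_general M i ω μ hμ h1 hval h01
end
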